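/- arXiv:2311.08575 — 2 statements merged into one kernel-verified Lean document; each statement's English description precedes it below -/
import Mathlib

section
/- Let K ⊆ ℝⁿ be a closed convex set with Gaussian measure γₙ(K) ≥ 0.9. Then K contains the closed unit Euclidean ball B(1) centered at the origin. -/
/-!
The density `(2π)^{-n/2} e^{-‖x‖²/2}` defines the standard Gaussian measure of
`ProbabilityTheory`, since both have characteristic function `exp (-‖t‖² / 2)`.

A closed convex set `K` missing a point `z` of the unit ball lies in an open half-space
`{y | L z < L y}` with `‖L‖ = 1`. The standard Gaussian pushes forward under `L` to `N(0, 1)` and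
`L z ≥ -1`, so `K` has Gaussian measure at most `P(N(0, 1) > -1) ≤ 1/√(2π) + 1/2 < 0.9`: the
density is at most `1/√(2π)` on `(-1, 0]`, and `(0, ∞)` has mass `1/2` by symmetry.
-/

open MeasureTheory ProbabilityTheory Real

/-- The standard Gaussian measure `N(0, Iₙ)` on `ℝⁿ`, defined via its density
`(2π)^{-n/2} e^{-‖x‖²/2}` with respect to Lebesgue measure. -/
noncomputable def stdGaussian (n : ℕ) : Measure (EuclideanSpace ℝ (Fin n)) :=
  volume.withDensity fun x => ENNReal.ofReal ((2 * π) ^ (-(n : ℝ) / 2) * Real.exp (-‖x‖ ^ 2 / 2))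

open scoped NNReal RealInnerProductSpace

lemma two_pi_rpow_neg_mul_rpow (d : ℝ) : (2 * π) ^ (-d / 2) * (2 * π) ^ (d / 2) = 1 := by
  rw [← rpow_add (by positivity), neg_div, neg_add_cancel, rpow_zero]

section StdGaussianDensity

variable {V : Type*} [NormedAddCommGroup V] [InnerProductSpace ℝ V]

variable (V) in
noncomputable def stdGaussianPDFReal (x : V) : ℝ :=
  (2 * π) ^ (-(Module.finrank ℝ V : ℝ) / 2) * Real.exp (-‖x‖ ^ 2 / 2)

lemma stdGaussianPDFReal_nonneg (x : V) : 0 ≤ stdGaussianPDFReal V x := by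
  unfold stdGaussianPDFReal; positivity

variable [FiniteDimensional ℝ V] [MeasurableSpace V] [BorelSpace V]

lemma integral_stdGaussianPDFReal : ∫ x, stdGaussianPDFReal V x = 1 := by
  have h : ∫ x : V, rexp (-‖x‖ ^ 2 / 2) = (2 * π) ^ (Module.finrank ℝ V / 2 : ℝ) := by
    convert GaussianFourier.integral_rexp_neg_mul_sq_norm (V := V) (b := 1 / 2) (by norm_num)
      using 3
    · ring_nf
    · ring
  simp only [stdGaussianPDFReal]
  rw [integral_const_mul, h, two_pi_rpow_neg_mul_rpow]

lemma integral_stdGaussianPDFReal_mul_cexp (t : V) :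
    ∫ x, (stdGaussianPDFReal V x : ℂ) * Complex.exp (⟪x, t⟫ * Complex.I) =
      Complex.exp (-‖t‖ ^ 2 / 2) := by
  have h : ∫ x : V, Complex.exp (-‖x‖ ^ 2 / 2 + ⟪x, t⟫ * Complex.I) =
      ((2 * π) ^ (Module.finrank ℝ V / 2 : ℝ) : ℝ) * Complex.exp (-‖t‖ ^ 2 / 2) := by
    convert GaussianFourier.integral_cexp_neg_mul_sq_norm_add (V := V) (b := 1 / 2) (by norm_num)
      Complex.I t using 3
    · congr 1; rw [real_inner_comm]; ring
    · rw [Complex.ofReal_cpow (by positivity)]; push_cast; ring_nf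
    · rw [Complex.I_sq]; ring
  simp only [stdGaussianPDFReal, Complex.ofReal_mul, mul_assoc, integral_const_mul,
    Complex.ofReal_exp, ← Complex.exp_add]
  push_cast
  rw [h, ← mul_assoc, ← Complex.ofReal_mul, two_pi_rpow_neg_mul_rpow]
  simp

lemma withDensity_stdGaussianPDFReal :
    volume.withDensity (fun x ↦ ENNReal.ofReal (stdGaussianPDFReal V x)) = stdGaussian V := by
  have hmeas : Measurable (stdGaussianPDFReal V) := by unfold stdGaussianPDFReal; fun_prop
  have hint : Integrable (stdGaussianPDFReal V) :=
    Integrable.of_integral_ne_zero (by simp [integral_stdGaussianPDFReal])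
  have : IsProbabilityMeasure
      (volume.withDensity fun x ↦ ENNReal.ofReal (stdGaussianPDFReal V x)) := by
    constructor
    rw [withDensity_apply _ MeasurableSet.univ, Measure.restrict_univ,
      ← ofReal_integral_eq_lintegral_ofReal hint (ae_of_all _ stdGaussianPDFReal_nonneg),
      integral_stdGaussianPDFReal, ENNReal.ofReal_one]
  refine Measure.ext_of_charFun (funext fun t ↦ ?_)
  rw [charFun_stdGaussian, charFun_apply, integral_withDensity_eq_integral_toReal_smul
    hmeas.ennreal_ofReal (ae_of_all _ fun _ ↦ ENNReal.ofReal_lt_top)]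
  simp_rw [ENNReal.toReal_ofReal (stdGaussianPDFReal_nonneg _), Complex.real_smul]
  exact integral_stdGaussianPDFReal_mul_cexp t

end StdGaussianDensity

lemma stdGaussian_eq_stdGaussian_euclideanSpace (n : ℕ) :
    _root_.stdGaussian n = ProbabilityTheory.stdGaussian (EuclideanSpace ℝ (Fin n)) := by
  rw [← withDensity_stdGaussianPDFReal, _root_.stdGaussian]
  simp only [stdGaussianPDFReal, finrank_euclideanSpace_fin]

lemma gaussianReal_Ioi_self {μ : ℝ} {v : ℝ≥0} (hv : v ≠ 0) :
    gaussianReal μ v (Set.Ioi μ) = 1 / 2 := by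
  set ν := gaussianReal μ v
  have hreflect : ν.map (2 * μ - ·) = ν := by
    rw [gaussianReal_map_const_sub, two_mul, add_sub_cancel_right]
  have hsymm : ν (Set.Iio μ) = ν (Set.Ioi μ) := by
    have hpre : (2 * μ - ·) ⁻¹' Set.Ioi μ = Set.Iio μ := by
      ext x
      simp only [Set.mem_preimage, Set.mem_Ioi, Set.mem_Iio]
      constructor <;> intro <;> linarith
    rw [← hpre, ← Measure.map_apply (by fun_prop) measurableSet_Ioi, hreflect]
  have hatom : ν {μ} = 0 := gaussianReal_absolutelyContinuous μ hv Real.volume_singleton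
  have htotal : ν (Set.Iic μ) + ν (Set.Ioi μ) = 1 := by
    rw [← measure_union (Set.Iic_disjoint_Ioi le_rfl) measurableSet_Ioi, Set.Iic_union_Ioi,
      measure_univ]
  rw [← measure_congr (Iio_ae_eq_Iic' hatom), hsymm, ← two_mul] at htotal
  exact (ENNReal.eq_div_iff two_ne_zero ENNReal.ofNat_ne_top).2 htotal

lemma gaussianReal_le_mul_volume (μ : ℝ) {v : ℝ≥0} (hv : v ≠ 0) (s : Set ℝ) :
    gaussianReal μ v s ≤ ENNReal.ofReal (√(2 * π * v))⁻¹ * volume s := by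
  rw [gaussianReal_apply μ hv, ← setLIntegral_const]
  refine lintegral_mono fun x ↦ ENNReal.ofReal_le_ofReal ?_
  rw [gaussianPDFReal]
  refine mul_le_of_le_one_right (by positivity) (exp_le_one_iff.2 ?_)
  have : 0 ≤ (x - μ) ^ 2 / (2 * v) := by positivity
  rw [neg_div]
  linarith

lemma gaussianReal_Ioi_neg_one_lt : gaussianReal 0 1 (Set.Ioi (-1)) < ENNReal.ofReal 0.9 := by
  have hsplit : Set.Ioc (-1) 0 ∪ Set.Ioi 0 = Set.Ioi (-1 : ℝ) :=
    Set.Ioc_union_Ioi_eq_Ioi (by norm_num)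
  have hsqrt : (√(2 * π))⁻¹ < 2 / 5 := by
    rw [inv_lt_comm₀ (by positivity) (by norm_num), lt_sqrt (by norm_num)]
    nlinarith [pi_gt_d2]
  calc gaussianReal 0 1 (Set.Ioi (-1))
      ≤ gaussianReal 0 1 (Set.Ioc (-1) 0) + gaussianReal 0 1 (Set.Ioi 0) :=
        hsplit ▸ measure_union_le _ _
    _ ≤ ENNReal.ofReal (√(2 * π))⁻¹ + ENNReal.ofReal (1 / 2) := by
        gcongr
        · simpa using gaussianReal_le_mul_volume 0 one_ne_zero (Set.Ioc (-1) 0)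
        · rw [gaussianReal_Ioi_self one_ne_zero, ENNReal.ofReal_div_of_pos two_pos]
          simp
    _ < ENNReal.ofReal 0.9 := by
        rw [← ENNReal.ofReal_add (by positivity) (by norm_num),
          ENNReal.ofReal_lt_ofReal_iff (by norm_num)]
        linarith

lemma geometric_hahn_banach_point_closed_norm_eq_one {E : Type*} [NormedAddCommGroup E]
    [NormedSpace ℝ E] {K : Set E} {z : E} (hK : Convex ℝ K) (hcl : IsClosed K) (hne : K.Nonempty)
    (hz : z ∉ K) : ∃ L : StrongDual ℝ E, ‖L‖ = 1 ∧ ∀ y ∈ K, L z < L y := by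
  obtain ⟨f, u, hfz, hfK⟩ := geometric_hahn_banach_point_closed hK hcl hz
  obtain ⟨b, hb⟩ := hne
  have hf : f ≠ 0 := by
    rintro rfl
    exact (hfz.trans (hfK b hb)).false
  refine ⟨‖f‖⁻¹ • f, norm_smul_inv_norm hf, fun y hy ↦ ?_⟩
  simp only [FunLike.coe_smul, Pi.smul_apply, smul_eq_mul]
  exact mul_lt_mul_of_pos_left (hfz.trans (hfK y hy)) (by positivity)

section StdGaussianHalfSpace

variable {E : Type*} [NormedAddCommGroup E] [InnerProductSpace ℝ E] [FiniteDimensional ℝ E]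
  [MeasurableSpace E] [BorelSpace E]

lemma stdGaussian_map_of_norm_eq_one {L : StrongDual ℝ E} (hL : ‖L‖ = 1) :
    (stdGaussian E).map L = gaussianReal 0 1 := by
  rw [IsGaussian.map_eq_gaussianReal, integral_strongDual_stdGaussian, variance_dual_stdGaussian,
    hL]
  simp

lemma stdGaussian_le_gaussianReal_Ioi_of_notMem {K : Set E} {z : E} (hK : Convex ℝ K)
    (hcl : IsClosed K) (hz : z ∉ K) :
    stdGaussian E K ≤ gaussianReal 0 1 (Set.Ioi (-‖z‖)) := by
  rcases K.eq_empty_or_nonempty with rfl | hne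
  · simp
  obtain ⟨L, hL, hLK⟩ := geometric_hahn_banach_point_closed_norm_eq_one hK hcl hne hz
  have hLz : -‖z‖ ≤ L z := by
    simpa [hL] using neg_le_of_abs_le (L.le_opNorm z)
  calc stdGaussian E K ≤ stdGaussian E (L ⁻¹' Set.Ioi (-‖z‖)) :=
        measure_mono fun y hy ↦ hLz.trans_lt (hLK y hy)
    _ = gaussianReal 0 1 (Set.Ioi (-‖z‖)) := by
        rw [← Measure.map_apply L.measurable measurableSet_Ioi, stdGaussian_map_of_norm_eq_one hL]

end StdGaussianHalfSpace

/-- A closed convex set of Gaussian measure at least `0.9` contains the unit ball. -/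
theorem ball_subset_of_large_volume (n : ℕ) (K : Set (EuclideanSpace ℝ (Fin n)))
    (hcl : IsClosed K) (hK : Convex ℝ K)
    (hvol : ENNReal.ofReal 0.9 ≤ stdGaussian n K) :
    Metric.closedBall (0 : EuclideanSpace ℝ (Fin n)) 1 ⊆ K := by
  intro z hz
  by_contra hzK
  rw [stdGaussian_eq_stdGaussian_euclideanSpace] at hvol
  have hnorm : -1 ≤ -‖z‖ := neg_le_neg (mem_closedBall_zero_iff.1 hz)
  refine (gaussianReal_Ioi_neg_one_lt.trans_le hvol).not_ge ?_
  calc ProbabilityTheory.stdGaussian _ K ≤ gaussianReal 0 1 (Set.Ioi (-‖z‖)) :=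
        stdGaussian_le_gaussianReal_Ioi_of_notMem hK hcl hzK
    _ ≤ gaussianReal 0 1 (Set.Ioi (-1)) := measure_mono (Set.Ioi_subset_Ioi hnorm)
end

section
/- Let K ⊆ ℝⁿ be a convex set containing the origin, identified with its 0/1 indicator. Then the total convex influence TInf[K] := E_{x∼N(0,Iₙ)}[K(x)·(n − ‖x‖²)] satisfies TInf[K] = lim_{δ→0} (γₙ((1+δ)K) − γₙ(K))/δ, where (1+δ)K = {(1+δ)x : x ∈ K}. -/
open MeasureTheory ProbabilityTheory Real

open Pointwise

/-!
Substituting `x = t • y` gives `γₙ(t • K) = ∫_K tⁿ φ(t • y) dy` for the Gaussian density `φ`,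
for every `t > 0` and every set `K`. The `t`-derivative of the integrand is
`(n tⁿ⁻¹ − tⁿ⁺¹ ‖y‖²) φ(t • y)`, which for `t` near `1` is dominated by an integrable
quadratic-times-Gaussian, so one may differentiate under the integral sign at `t = 1` and obtain
`∫_K (n − ‖y‖²) φ(y) dy`, the total convex influence.
-/

open Filter

section GaussianMoments

variable {V : Type*} [NormedAddCommGroup V] [InnerProductSpace ℝ V] [FiniteDimensional ℝ V]
  [MeasurableSpace V] [BorelSpace V]

lemma integrable_exp_neg_mul_sq_norm {b : ℝ} (hb : 0 < b) :
    Integrable fun x : V => rexp (-b * ‖x‖ ^ 2) :=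
  Integrable.of_integral_ne_zero <| by
    rw [GaussianFourier.integral_rexp_neg_mul_sq_norm hb]; positivity

lemma integrable_sq_norm_mul_exp_neg_mul_sq_norm {b : ℝ} (hb : 0 < b) :
    Integrable fun x : V => ‖x‖ ^ 2 * rexp (-b * ‖x‖ ^ 2) := by
  refine ((integrable_exp_neg_mul_sq_norm (half_pos hb)).const_mul (2 / b)).mono'
    (by fun_prop : Continuous _).aestronglyMeasurable (Eventually.of_forall fun x => ?_)
  set u := b / 2 * ‖x‖ ^ 2
  have hu : u * rexp (-u) ≤ 1 := (mul_exp_neg_le_exp_neg_one u).trans (by simp)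
  have hsplit :
      ‖x‖ ^ 2 * rexp (-b * ‖x‖ ^ 2) = 2 / b * (u * rexp (-u)) * rexp (-(b / 2) * ‖x‖ ^ 2) := by
    rw [mul_assoc, mul_assoc, ← Real.exp_add, ← mul_assoc (2 / b)]
    congr 2
    · simp only [u]; field_simp
    · ring
  rw [Real.norm_of_nonneg (by positivity), hsplit]
  gcongr
  exact mul_le_of_le_one_right (by positivity) hu

end GaussianMoments

section Density

variable {n : ℕ}

noncomputable def stdGaussianDensity (n : ℕ) (x : EuclideanSpace ℝ (Fin n)) : ℝ :=
  (2 * π) ^ (-(n : ℝ) / 2) * rexp (-‖x‖ ^ 2 / 2)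

lemma stdGaussianDensity_pos (x : EuclideanSpace ℝ (Fin n)) : 0 < stdGaussianDensity n x := by
  unfold stdGaussianDensity; positivity

@[fun_prop]
lemma continuous_stdGaussianDensity : Continuous (stdGaussianDensity n) := by
  unfold stdGaussianDensity; fun_prop

lemma stdGaussianDensity_smul (t : ℝ) (x : EuclideanSpace ℝ (Fin n)) :
    stdGaussianDensity n (t • x) = (2 * π) ^ (-(n : ℝ) / 2) * rexp (-(t ^ 2 / 2) * ‖x‖ ^ 2) := by
  simp only [stdGaussianDensity, norm_smul, Real.norm_eq_abs, mul_pow, sq_abs]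
  ring_nf

lemma integrable_stdGaussianDensity : Integrable (stdGaussianDensity n) := by
  refine ((integrable_exp_neg_mul_sq_norm (b := 1 / 2) (by norm_num)).const_mul
    ((2 * π) ^ (-(n : ℝ) / 2))).congr (Eventually.of_forall fun x => ?_)
  simp only [stdGaussianDensity]
  ring_nf

lemma stdGaussianDensity_le_of_norm_le {x y : EuclideanSpace ℝ (Fin n)} (h : ‖x‖ ≤ ‖y‖) :
    stdGaussianDensity n y ≤ stdGaussianDensity n x := by
  unfold stdGaussianDensity
  gcongr

lemma hasDerivAt_stdGaussianDensity_smul (x : EuclideanSpace ℝ (Fin n)) (t : ℝ) :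
    HasDerivAt (fun s : ℝ => stdGaussianDensity n (s • x))
      (-(t * ‖x‖ ^ 2) * stdGaussianDensity n (t • x)) t := by
  have hquad : HasDerivAt (fun s : ℝ => -(s ^ 2 / 2) * ‖x‖ ^ 2) (-(t * ‖x‖ ^ 2)) t := by
    refine (((hasDerivAt_pow 2 t).div_const 2).neg.mul_const (‖x‖ ^ 2)).congr_deriv ?_
    ring
  simp_rw [stdGaussianDensity_smul]
  exact (hquad.exp.const_mul ((2 * π) ^ (-(n : ℝ) / 2))).congr_deriv (by ring)

lemma hasDerivAt_pow_mul_stdGaussianDensity_smul (x : EuclideanSpace ℝ (Fin n)) (t : ℝ) :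
    HasDerivAt (fun s : ℝ => s ^ n * stdGaussianDensity n (s • x))
      ((n * t ^ (n - 1) - t ^ (n + 1) * ‖x‖ ^ 2) * stdGaussianDensity n (t • x)) t :=
  ((hasDerivAt_pow n t).mul (hasDerivAt_stdGaussianDensity_smul x t)).congr_deriv (by ring)

end Density

section Dilation

variable {n : ℕ}

lemma norm_dilation_deriv_le (x : EuclideanSpace ℝ (Fin n)) {t : ℝ} (ht₀ : 1 / 2 ≤ t)
    (ht₁ : t ≤ 2) :
    ‖(n * t ^ (n - 1) - t ^ (n + 1) * ‖x‖ ^ 2) * stdGaussianDensity n (t • x)‖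
      ≤ 2 ^ (n + 1) * (n + ‖x‖ ^ 2) * stdGaussianDensity n ((1 / 2 : ℝ) • x) := by
  have hpoly : |n * t ^ (n - 1) - t ^ (n + 1) * ‖x‖ ^ 2| ≤ 2 ^ (n + 1) * (n + ‖x‖ ^ 2) := by
    have h₁ : t ^ (n - 1) ≤ 2 ^ (n + 1) :=
      (pow_le_pow_left₀ (by linarith) ht₁ _).trans (pow_le_pow_right₀ one_le_two (by omega))
    have h₂ : t ^ (n + 1) ≤ 2 ^ (n + 1) := pow_le_pow_left₀ (by linarith) ht₁ _
    have h₁' : 0 ≤ t ^ (n - 1) := by positivity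
    have h₂' : 0 ≤ t ^ (n + 1) := by positivity
    rw [abs_le]
    constructor <;> nlinarith [sq_nonneg ‖x‖, (n.cast_nonneg : (0 : ℝ) ≤ n)]
  have hdens : stdGaussianDensity n (t • x) ≤ stdGaussianDensity n ((1 / 2 : ℝ) • x) := by
    refine stdGaussianDensity_le_of_norm_le ?_
    rw [norm_smul, norm_smul, Real.norm_of_nonneg (by norm_num), Real.norm_of_nonneg (by linarith)]
    gcongr
  rw [norm_mul, Real.norm_eq_abs, Real.norm_of_nonneg (stdGaussianDensity_pos _).le]
  exact mul_le_mul hpoly hdens (stdGaussianDensity_pos _).le (by positivity)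

lemma integrable_dilation_bound :
    Integrable fun x : EuclideanSpace ℝ (Fin n) =>
      2 ^ (n + 1) * (n + ‖x‖ ^ 2) * stdGaussianDensity n ((1 / 2 : ℝ) • x) := by
  have h := ((integrable_exp_neg_mul_sq_norm (V := EuclideanSpace ℝ (Fin n))
      (b := 1 / 8) (by norm_num)).const_mul n).add
    (integrable_sq_norm_mul_exp_neg_mul_sq_norm (b := 1 / 8) (by norm_num))
  refine (h.const_mul (2 ^ (n + 1) * (2 * π) ^ (-(n : ℝ) / 2))).congr
    (Eventually.of_forall fun x => ?_)
  simp only [Pi.add_apply, stdGaussianDensity_smul]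
  ring_nf

lemma hasDerivAt_setIntegral_dilation (s : Set (EuclideanSpace ℝ (Fin n))) :
    HasDerivAt (fun t : ℝ => ∫ x in s, t ^ n * stdGaussianDensity n (t • x))
      (∫ x in s, (n - ‖x‖ ^ 2) * stdGaussianDensity n x) 1 := by
  have hball : ∀ t ∈ Metric.ball (1 : ℝ) (1 / 2), 1 / 2 ≤ t ∧ t ≤ 2 := by
    intro t ht
    rw [Real.ball_eq_Ioo] at ht
    exact ⟨by linarith [ht.1], by linarith [ht.2]⟩
  have key := hasDerivAt_integral_of_dominated_loc_of_deriv_le (μ := volume.restrict s)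
    (F' := fun t x => (n * t ^ (n - 1) - t ^ (n + 1) * ‖x‖ ^ 2) * stdGaussianDensity n (t • x))
    (Metric.ball_mem_nhds (1 : ℝ) (by norm_num : (0 : ℝ) < 1 / 2))
    (Eventually.of_forall fun t => (by fun_prop : Continuous _).aestronglyMeasurable)
    ?_ (by fun_prop : Continuous _).aestronglyMeasurable
    (Eventually.of_forall fun x t ht =>
      norm_dilation_deriv_le x (hball t ht).1 (hball t ht).2)
    integrable_dilation_bound.restrict
    (Eventually.of_forall fun x t _ => hasDerivAt_pow_mul_stdGaussianDensity_smul x t)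
  · simpa using key.2
  · simpa using (integrable_stdGaussianDensity (n := n)).restrict

end Dilation

section Measure

variable {n : ℕ}

lemma stdGaussian_eq_withDensity (n : ℕ) :
    stdGaussian n = volume.withDensity fun x => ENNReal.ofReal (stdGaussianDensity n x) :=
  rfl

lemma stdGaussian_toReal (s : Set (EuclideanSpace ℝ (Fin n))) :
    (stdGaussian n s).toReal = ∫ x in s, stdGaussianDensity n x := by
  rw [stdGaussian_eq_withDensity, withDensity_apply', integral_eq_lintegral_of_nonneg_ae
    (Eventually.of_forall fun x => (stdGaussianDensity_pos x).le)
    (by fun_prop : Continuous _).aestronglyMeasurable]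

lemma stdGaussian_smul_toReal (s : Set (EuclideanSpace ℝ (Fin n))) {t : ℝ} (ht : 0 < t) :
    (stdGaussian n (t • s)).toReal = ∫ x in s, t ^ n * stdGaussianDensity n (t • x) := by
  rw [integral_const_mul, Measure.setIntegral_comp_smul_of_pos _ _ _ ht,
    finrank_euclideanSpace_fin, smul_eq_mul, mul_inv_cancel_left₀ (by positivity),
    stdGaussian_toReal]

lemma setIntegral_stdGaussian (s : Set (EuclideanSpace ℝ (Fin n)))
    (g : EuclideanSpace ℝ (Fin n) → ℝ) :
    ∫ x in s, g x ∂stdGaussian n = ∫ x in s, g x * stdGaussianDensity n x := by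
  rw [stdGaussian_eq_withDensity, setIntegral_withDensity_eq_setIntegral_toReal_smul' s
    (by fun_prop : Continuous _).measurable.ennreal_ofReal
    (Eventually.of_forall fun _ => ENNReal.ofReal_lt_top)]
  congr 1 with x
  rw [ENNReal.toReal_ofReal (stdGaussianDensity_pos x).le, smul_eq_mul, mul_comm]

theorem hasDerivAt_stdGaussian_smul (s : Set (EuclideanSpace ℝ (Fin n))) :
    HasDerivAt (fun t : ℝ => (stdGaussian n (t • s)).toReal)
      (∫ x in s, (n - ‖x‖ ^ 2) ∂stdGaussian n) 1 := by
  rw [setIntegral_stdGaussian]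
  refine (hasDerivAt_setIntegral_dilation s).congr_of_eventuallyEq ?_
  filter_upwards [lt_mem_nhds one_pos] with t ht using stdGaussian_smul_toReal s ht

end Measure

theorem tinf_dilation_general (n : ℕ) (K : Set (EuclideanSpace ℝ (Fin n))) (hK : Convex ℝ K) :
    Filter.Tendsto
      (fun δ : ℝ => ((stdGaussian n ((1 + δ) • K)).toReal - (stdGaussian n K).toReal) / δ)
      (nhdsWithin 0 (Set.Ioi 0))
      (nhds (∫ x, Set.indicator K (fun x => (n : ℝ) - ‖x‖ ^ 2) x ∂stdGaussian n)) := by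
  have hKγ : NullMeasurableSet K (stdGaussian n) :=
    (hK.nullMeasurableSet (μ := volume)).mono_ac (withDensity_absolutelyContinuous _ _)
  rw [integral_indicator₀ hKγ]
  simpa [div_eq_inv_mul] using (hasDerivAt_stdGaussian_smul K).tendsto_slope_zero_right

/-- Dilation formulation of total convex influence:
`TInf[K] = lim_{δ→0⁺} (γₙ((1+δ)K) − γₙ(K))/δ`. -/
theorem tinf_dilation (n : ℕ) (K : Set (EuclideanSpace ℝ (Fin n))) (hK : Convex ℝ K)
    (h0 : (0 : EuclideanSpace ℝ (Fin n)) ∈ K) :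
    Filter.Tendsto
      (fun δ : ℝ => ((stdGaussian n ((1 + δ) • K)).toReal - (stdGaussian n K).toReal) / δ)
      (nhdsWithin 0 (Set.Ioi 0))
      (nhds (∫ x, Set.indicator K (fun x => (n : ℝ) - ‖x‖ ^ 2) x ∂stdGaussian n)) :=
  tinf_dilation_general n K hK
end
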